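/- arXiv:2407.00490 — 5 statements merged into one kernel-verified Lean document; each statement's English description precedes it below -/
import Mathlib

section
/- For x ~ N(0, I_d) in R^d and any constant c with 0 < c ≤ 1/(3d), the moment generating function of the norm satisfies E[exp(c‖x‖)] ≤ 1 + 5√d · c. -/
/-!
Choosing `k = √d` in the AM-GM bound `c‖x‖ ≤ c k / 2 + (c / k) ‖x‖² / 2` reduces the claim to the
Gaussian integral `E[exp(s‖x‖² / 2)] = (1 - s)^(-d/2)`, which factorizes over the coordinates.
For `s = c / √d ≤ 1/3` we have `(1 - s)^(-1/2) ≤ exp(3s/4)`, so the moment generating function is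
at most `exp(5√d c / 4)`, and `exp u ≤ 1 + 4u` for `0 ≤ u ≤ 3/2`.
-/

open MeasureTheory ProbabilityTheory Real Finset
open scoped RealInnerProductSpace BigOperators ENNReal NNReal

noncomputable def stdGaussian (d : ℕ) : Measure (EuclideanSpace ℝ (Fin d)) :=
  (Measure.pi fun _ : Fin d => gaussianReal 0 1).map ⇑(EuclideanSpace.equiv (Fin d) ℝ).symm

noncomputable def gmmPsi {d n : ℕ} (w : Fin n → ℝ) (μ : Fin n → EuclideanSpace ℝ (Fin d))
    (i : Fin n) (x : EuclideanSpace ℝ (Fin d)) : ℝ :=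
  w i * Real.exp (-‖x - μ i‖ ^ 2 / 2) / ∑ k, w k * Real.exp (-‖x - μ k‖ ^ 2 / 2)

noncomputable def psiTilde {d n : ℕ} (w : Fin n → ℝ) (μ : Fin n → EuclideanSpace ℝ (Fin d))
    (x : EuclideanSpace ℝ (Fin d)) : EuclideanSpace ℝ (Fin d) :=
  ∑ i, gmmPsi w μ i x • μ i

noncomputable def gmmPdf {d n : ℕ} (w : Fin n → ℝ) (μ : Fin n → EuclideanSpace ℝ (Fin d))
    (x : EuclideanSpace ℝ (Fin d)) : ℝ :=
  ∑ i, w i * ((2 * Real.pi) ^ (-(d : ℝ) / 2) * Real.exp (-‖x - μ i‖ ^ 2 / 2))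

noncomputable def gmmLoss {d n : ℕ} (w : Fin n → ℝ) (μ : Fin n → EuclideanSpace ℝ (Fin d)) : ℝ :=
  -∫ x, Real.log (gmmPdf w μ x / ((2 * Real.pi) ^ (-(d : ℝ) / 2) * Real.exp (-‖x‖ ^ 2 / 2)))
      ∂ stdGaussian d

noncomputable def gmmGrad {d n : ℕ} (w : Fin n → ℝ) (μ : Fin n → EuclideanSpace ℝ (Fin d))
    (i : Fin n) : EuclideanSpace ℝ (Fin d) :=
  ∫ x, gmmPsi w μ i x • psiTilde w μ x ∂ stdGaussian d

lemma integral_exp_mul_sq_gaussianReal {v : ℝ≥0} (hv : v ≠ 0) {s : ℝ} (hs : s * v < 1) :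
    ∫ x, exp (s * x ^ 2 / 2) ∂gaussianReal 0 v = (√(1 - s * v))⁻¹ := by
  have hv' : (0 : ℝ) < v := by positivity
  have hsv : 0 < 1 - s * v := by linarith
  have hpdf : ∀ x, gaussianPDFReal 0 v x • exp (s * x ^ 2 / 2)
      = (√(2 * π * v))⁻¹ * exp (-((1 - s * v) / (2 * v)) * x ^ 2) := fun x => by
    rw [gaussianPDFReal, smul_eq_mul, mul_assoc, ← exp_add]
    congr 2
    field_simp
    ring
  simp_rw [integral_gaussianReal_eq_integral_smul hv, hpdf, integral_const_mul, integral_gaussian]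
  have : π / ((1 - s * v) / (2 * v)) = 2 * π * v / (1 - s * v) := by field_simp
  rw [this, sqrt_div' _ hsv.le, div_eq_mul_inv, ← mul_assoc, inv_mul_cancel₀ (by positivity),
    one_mul]

lemma integral_stdGaussian (d : ℕ) (f : EuclideanSpace ℝ (Fin d) → ℝ) :
    ∫ x, f x ∂stdGaussian d = ∫ y, f (WithLp.toLp 2 y) ∂Measure.pi fun _ => gaussianReal 0 1 :=
  integral_map_equiv (MeasurableEquiv.toLp 2 (Fin d → ℝ)) f

lemma integral_exp_mul_norm_sq_stdGaussian (d : ℕ) {s : ℝ} (hs : s < 1) :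
    ∫ x, exp (s * ‖x‖ ^ 2 / 2) ∂stdGaussian d = (√(1 - s))⁻¹ ^ d := by
  have hprod : ∀ y : Fin d → ℝ,
      exp (s * ‖WithLp.toLp 2 y‖ ^ 2 / 2) = ∏ i, exp (s * y i ^ 2 / 2) := fun y => by
    simp only [EuclideanSpace.norm_sq_eq, Real.norm_eq_abs, sq_abs, Finset.mul_sum,
      Finset.sum_div, exp_sum]
  rw [integral_stdGaussian, funext hprod,
    integral_fintype_prod_eq_pow (fun x => exp (s * x ^ 2 / 2)), Fintype.card_fin,
    integral_exp_mul_sq_gaussianReal one_ne_zero (by simpa using hs), NNReal.coe_one, mul_one]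

lemma integrable_exp_mul_norm_sq_stdGaussian (d : ℕ) {s : ℝ} (hs : s < 1) :
    Integrable (fun x => exp (s * ‖x‖ ^ 2 / 2)) (stdGaussian d) :=
  .of_integral_ne_zero <| by
    rw [integral_exp_mul_norm_sq_stdGaussian d hs]
    exact pow_ne_zero _ (inv_ne_zero (sqrt_ne_zero'.2 (sub_pos.2 hs)))

lemma integral_exp_mul_norm_stdGaussian_le (d : ℕ) {c k : ℝ} (hc : 0 ≤ c) (hk : 0 < k)
    (hck : c < k) :
    ∫ x, exp (c * ‖x‖) ∂stdGaussian d ≤ exp (c * k / 2) * (√(1 - c / k))⁻¹ ^ d := by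
  have amgm (t : ℝ) : c * t ≤ c * k / 2 + c / k * t ^ 2 / 2 := by
    have : c * k / 2 + c / k * t ^ 2 / 2 - c * t = c / (2 * k) * (k - t) ^ 2 := by
      field_simp
      ring
    exact sub_nonneg.1 (this ▸ by positivity)
  rw [← integral_exp_mul_norm_sq_stdGaussian d ((div_lt_one hk).2 hck), ← integral_const_mul]
  refine integral_mono_of_nonneg (.of_forall fun x => (exp_pos _).le)
    ((integrable_exp_mul_norm_sq_stdGaussian d ((div_lt_one hk).2 hck)).const_mul _)
    (.of_forall fun x => ?_)
  dsimp only
  rw [← exp_add]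
  exact exp_le_exp.2 (by linarith [amgm ‖x‖])

lemma inv_sqrt_one_sub_le_exp {s : ℝ} (hs₀ : 0 ≤ s) (hs : s ≤ 1 / 3) :
    (√(1 - s))⁻¹ ≤ exp (3 / 4 * s) := by
  have hinv : (1 - s)⁻¹ ≤ exp (3 / 2 * s) := by
    calc (1 - s)⁻¹ ≤ 3 / 2 * s + 1 := by
          rw [inv_le_iff_one_le_mul₀ (by linarith)]; nlinarith
      _ ≤ exp (3 / 2 * s) := add_one_le_exp _
  calc (√(1 - s))⁻¹ = √((1 - s)⁻¹) := (sqrt_inv _).symm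
    _ ≤ √(exp (3 / 2 * s)) := sqrt_le_sqrt hinv
    _ = exp (3 / 4 * s) := by rw [← exp_half]; ring_nf

lemma exp_le_one_add_four_mul {u : ℝ} (hu₀ : 0 ≤ u) (hu : u ≤ 3 / 2) : exp u ≤ 1 + 4 * u := by
  refine (exp_le_two_add_div_two_sub hu₀ (by linarith)).trans ?_
  rw [div_le_iff₀ (by linarith)]
  nlinarith

/-- For `x ~ N(0, I_d)` and any `0 < c ≤ 1/(3d)`, `E[exp(c‖x‖)] ≤ 1 + 5√d · c`. -/
theorem mgf_norm_upper_bound (d : ℕ) (c : ℝ) (hc : 0 < c) (hc' : c ≤ 1 / (3 * d)) :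
    ∫ x, Real.exp (c * ‖x‖) ∂ stdGaussian d ≤ 1 + 5 * Real.sqrt d * c := by
  rcases Nat.eq_zero_or_pos d with rfl | hd
  · simp at hc'
    linarith
  have hd₁ : (1 : ℝ) ≤ d := by exact_mod_cast hd
  have hsqrt : 1 ≤ √d := one_le_sqrt.2 hd₁
  have hcd : c * d ≤ 1 / 3 := by
    rw [le_div_iff₀ (by positivity)] at hc'
    linarith
  have ha : √d * c ≤ 1 / 3 := by nlinarith [mul_self_sqrt (Nat.cast_nonneg (α := ℝ) d)]
  have hs : c / √d ≤ 1 / 3 := (div_le_self hc.le hsqrt).trans (by nlinarith)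
  calc ∫ x, exp (c * ‖x‖) ∂stdGaussian d
      ≤ exp (c * √d / 2) * (√(1 - c / √d))⁻¹ ^ d :=
        integral_exp_mul_norm_stdGaussian_le d hc.le (by linarith) (by nlinarith)
    _ ≤ exp (c * √d / 2) * exp (3 / 4 * (c / √d)) ^ d := by
        gcongr
        exact inv_sqrt_one_sub_le_exp (by positivity) hs
    _ = exp (5 / 4 * (√d * c)) := by
        rw [← exp_nat_mul, ← exp_add]
        congr 1
        field_simp
        rw [sq_sqrt (by positivity)]
        ring
    _ ≤ 1 + 5 * √d * c := by
        refine (exp_le_one_add_four_mul (by positivity) (by linarith)).trans_eq ?_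
        ring
end

section
/- Let ψ̃_μ(x) = Σ_{i∈[n]} ψ_i(x) μ_i where ψ_i are GMM membership weights. Then the Jacobian satisfies ∇_x ψ̃_μ(x) = (1/2) Σ_{i,j∈[n]} ψ_i(x) ψ_j(x) (μ_i − μ_j)(μ_i − μ_j)^T; in particular ∇_x ψ̃_μ(x) is positive semi-definite. -/
open MeasureTheory ProbabilityTheory Real Finset
open scoped RealInnerProductSpace BigOperators ENNReal NNReal

/-!
Write `ψ_i = f_i / Σ_k f_k` with `f_i(x) = π_i exp(-‖x - μ_i‖² / 2)`. Since `∇f_i = f_i ⟨μ_i - x, ·⟩`,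
the quotient rule gives `∇ψ_i = ψ_i (b_i - Σ_k ψ_k b_k)` with `b_i = ⟨μ_i - x, ·⟩`. Because the
weights `ψ_k` sum to one, the resulting sum `Σ_i ψ_i (b_i - Σ_k ψ_k b_k) μ_i` symmetrises to
`½ Σ_{i,j} ψ_i ψ_j (b_i - b_j)(μ_i - μ_j)`, and `b_i - b_j = ⟨μ_i - μ_j, ·⟩` no longer depends on `x`.
Each term of the symmetrised sum is a nonnegative multiple of `v ↦ ⟨μ_i - μ_j, v⟩ (μ_i - μ_j)`.
-/

theorem HasFDerivAt.div_sum {ι E : Type*} [Fintype ι] [NormedAddCommGroup E] [NormedSpace ℝ E]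
    {f : ι → E → ℝ} {L : ι → E →L[ℝ] ℝ} {x : E} (hf : ∀ i, HasFDerivAt (f i) (f i x • L i) x)
    (hZ : ∑ k, f k x ≠ 0) (i : ι) :
    HasFDerivAt (fun y => f i y / ∑ k, f k y)
      ((f i x / ∑ k, f k x) • (L i - ∑ k, (f k x / ∑ k, f k x) • L k)) x := by
  have hsum : HasFDerivAt (fun y => ∑ k, f k y) (∑ k, f k x • L k) x :=
    HasFDerivAt.fun_sum fun k _ => hf k
  have hinv := (hasDerivAt_inv hZ).comp_hasFDerivAt x hsum
  refine ((hf i).mul hinv).congr_fderiv ?_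
  simp only [Function.comp_apply, div_eq_inv_mul, mul_smul, ← Finset.smul_sum]
  generalize ∑ k, f k x = Z at *
  generalize ∑ k, f k x • L k = S
  match_scalars <;> field_simp

theorem Finset.sum_mul_sub_weighted_sum_smul {ι M : Type*} [AddCommGroup M] [Module ℝ M]
    (s : Finset ι) (p b : ι → ℝ) (μ : ι → M) (hp : ∑ k ∈ s, p k = 1) :
    ∑ i ∈ s, (p i * (b i - ∑ k ∈ s, p k * b k)) • μ i
      = (1 / 2 : ℝ) • ∑ i ∈ s, ∑ j ∈ s, (p i * p j * (b i - b j)) • (μ i - μ j) := by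
  have hrow (i : ι) : ∑ j ∈ s, p i * p j * (b i - b j) = p i * (b i - ∑ k ∈ s, p k * b k) := by
    simp only [mul_sub, sum_sub_distrib, ← sum_mul, ← mul_sum, hp, mul_assoc]
    ring
  have hanti : ∑ i ∈ s, ∑ j ∈ s, (p i * p j * (b i - b j)) • μ j
      = -∑ i ∈ s, ∑ j ∈ s, (p i * p j * (b i - b j)) • μ i := by
    rw [sum_comm, ← sum_neg_distrib]
    refine sum_congr rfl fun i _ => ?_
    rw [← sum_neg_distrib]
    exact sum_congr rfl fun j _ => by rw [← neg_smul]; ring_nf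
  calc ∑ i ∈ s, (p i * (b i - ∑ k ∈ s, p k * b k)) • μ i
      = ∑ i ∈ s, ∑ j ∈ s, (p i * p j * (b i - b j)) • μ i := by
        simp only [← hrow, sum_smul]
    _ = (1 / 2 : ℝ) • (∑ i ∈ s, ∑ j ∈ s, (p i * p j * (b i - b j)) • μ i
          - ∑ i ∈ s, ∑ j ∈ s, (p i * p j * (b i - b j)) • μ j) := by
        rw [hanti, sub_neg_eq_add, ← two_smul ℝ, smul_smul]
        norm_num
    _ = (1 / 2 : ℝ) • ∑ i ∈ s, ∑ j ∈ s, (p i * p j * (b i - b j)) • (μ i - μ j) := by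
        simp only [smul_sub, sum_sub_distrib]

section InnerProductSpace

variable {E : Type*} [NormedAddCommGroup E] [InnerProductSpace ℝ E]

theorem hasFDerivAt_exp_neg_norm_sub_sq_div_two (m x : E) :
    HasFDerivAt (fun y => Real.exp (-‖y - m‖ ^ 2 / 2))
      (Real.exp (-‖x - m‖ ^ 2 / 2) • innerSL ℝ (m - x)) x := by
  have hsq := ((hasFDerivAt_id x).sub_const m).norm_sq.const_mul (-(1 / 2 : ℝ))
  have hfun : (fun y : E => -(1 / 2 : ℝ) * ‖id y - m‖ ^ 2) = fun y => -‖y - m‖ ^ 2 / 2 := by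
    ext y
    simp only [id]
    ring
  rw [hfun] at hsq
  refine hsq.exp.congr_fderiv ?_
  ext y
  simp
  ring

theorem inner_sum_sum_smul_inner_smul_nonneg {ι : Type*} (s : Finset ι) (c : ι → ι → ℝ)
    (hc : ∀ i j, 0 ≤ c i j) (a : ι → ι → E) (v : E) :
    0 ≤ ⟪v, ∑ i ∈ s, ∑ j ∈ s, (c i j * ⟪a i j, v⟫) • a i j⟫ := by
  simp only [inner_sum, real_inner_smul_right, real_inner_comm v, mul_assoc]
  exact sum_nonneg fun i _ => sum_nonneg fun j _ => mul_nonneg (hc i j) (mul_self_nonneg _)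

end InnerProductSpace

section GMM

variable {d n : ℕ} {w : Fin n → ℝ}

theorem sum_mul_exp_neg_norm_sub_sq_pos [Nonempty (Fin n)] (hw : ∀ i, 0 < w i)
    (μ : Fin n → EuclideanSpace ℝ (Fin d)) (x : EuclideanSpace ℝ (Fin d)) :
    0 < ∑ k, w k * Real.exp (-‖x - μ k‖ ^ 2 / 2) :=
  sum_pos (fun k _ => mul_pos (hw k) (Real.exp_pos _)) univ_nonempty

theorem gmmPsi_nonneg (hw : ∀ i, 0 ≤ w i) (μ : Fin n → EuclideanSpace ℝ (Fin d)) (i : Fin n)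
    (x : EuclideanSpace ℝ (Fin d)) : 0 ≤ gmmPsi w μ i x := by
  have hterm (k : Fin n) : 0 ≤ w k * Real.exp (-‖x - μ k‖ ^ 2 / 2) :=
    mul_nonneg (hw k) (Real.exp_pos _).le
  exact div_nonneg (hterm i) (sum_nonneg fun k _ => hterm k)

theorem sum_gmmPsi [Nonempty (Fin n)] (hw : ∀ i, 0 < w i) (μ : Fin n → EuclideanSpace ℝ (Fin d))
    (x : EuclideanSpace ℝ (Fin d)) : ∑ i, gmmPsi w μ i x = 1 := by
  simp only [gmmPsi]
  rw [← sum_div, div_self (sum_mul_exp_neg_norm_sub_sq_pos hw μ x).ne']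

theorem hasFDerivAt_gmmPsi [Nonempty (Fin n)] (hw : ∀ i, 0 < w i)
    (μ : Fin n → EuclideanSpace ℝ (Fin d)) (i : Fin n) (x : EuclideanSpace ℝ (Fin d)) :
    HasFDerivAt (gmmPsi w μ i)
      (gmmPsi w μ i x • (innerSL ℝ (μ i - x) - ∑ k, gmmPsi w μ k x • innerSL ℝ (μ k - x))) x := by
  refine HasFDerivAt.div_sum (f := fun k y => w k * Real.exp (-‖y - μ k‖ ^ 2 / 2))
    (L := fun k => innerSL ℝ (μ k - x)) (fun k => ?_) (sum_mul_exp_neg_norm_sub_sq_pos hw μ x).ne' i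
  exact ((hasFDerivAt_exp_neg_norm_sub_sq_div_two (μ k) x).const_mul (w k)).congr_fderiv
    (smul_smul _ _ _)

theorem fderiv_psiTilde_apply [Nonempty (Fin n)] (hw : ∀ i, 0 < w i)
    (μ : Fin n → EuclideanSpace ℝ (Fin d)) (x v : EuclideanSpace ℝ (Fin d)) :
    fderiv ℝ (psiTilde w μ) x v = ∑ i, (gmmPsi w μ i x *
      (⟪μ i - x, v⟫ - ∑ k, gmmPsi w μ k x * ⟪μ k - x, v⟫)) • μ i := by
  have h : HasFDerivAt (psiTilde w μ) (∑ i, (gmmPsi w μ i x • (innerSL ℝ (μ i - x)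
      - ∑ k, gmmPsi w μ k x • innerSL ℝ (μ k - x))).smulRight (μ i)) x :=
    HasFDerivAt.fun_sum fun i _ => (hasFDerivAt_gmmPsi hw μ i x).smul_const (μ i)
  simp [h.fderiv, inner_sub_left]

end GMM

theorem psiTilde_jacobian_general {d n : ℕ} (w : Fin n → ℝ) (μ : Fin n → EuclideanSpace ℝ (Fin d))
    (hw : ∀ i, 0 < w i)
    (x v : EuclideanSpace ℝ (Fin d)) :
    fderiv ℝ (psiTilde w μ) x v
        = (1 / 2 : ℝ) • ∑ i, ∑ j,
            (gmmPsi w μ i x * gmmPsi w μ j x * ⟪μ i - μ j, v⟫) • (μ i - μ j)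
      ∧ 0 ≤ ⟪v, fderiv ℝ (psiTilde w μ) x v⟫ := by
  rcases isEmpty_or_nonempty (Fin n) with _ | _
  · have hzero : psiTilde w μ = 0 := funext fun y => by simp [psiTilde]
    simp [hzero]
  have hjac : fderiv ℝ (psiTilde w μ) x v = (1 / 2 : ℝ) • ∑ i, ∑ j,
      (gmmPsi w μ i x * gmmPsi w μ j x * ⟪μ i - μ j, v⟫) • (μ i - μ j) := by
    rw [fderiv_psiTilde_apply hw, sum_mul_sub_weighted_sum_smul _ _ _ _ (sum_gmmPsi hw μ x)]
    simp only [← inner_sub_left, sub_sub_sub_cancel_right]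
  have hψ (i : Fin n) : 0 ≤ gmmPsi w μ i x := gmmPsi_nonneg (fun k => (hw k).le) μ i x
  refine ⟨hjac, ?_⟩
  rw [hjac, real_inner_smul_right]
  exact mul_nonneg (by norm_num) (inner_sum_sum_smul_inner_smul_nonneg _ _
    (fun i j => mul_nonneg (hψ i) (hψ j)) _ v)

/-- The Jacobian of `ψ̃_μ` is `(1/2) Σ_{i,j} ψ_i ψ_j (μ_i − μ_j)(μ_i − μ_j)ᵀ`, and in particular
it is positive semi-definite. -/
theorem psiTilde_jacobian {d n : ℕ} (w : Fin n → ℝ) (μ : Fin n → EuclideanSpace ℝ (Fin d))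
    (hw : ∀ i, 0 < w i) (hsum : ∑ i, w i = 1)
    (x v : EuclideanSpace ℝ (Fin d)) :
    fderiv ℝ (psiTilde w μ) x v
        = (1 / 2 : ℝ) • ∑ i, ∑ j,
            (gmmPsi w μ i x * gmmPsi w μ j x * ⟪μ i - μ j, v⟫) • (μ i - μ j)
      ∧ 0 ≤ ⟪v, fderiv ℝ (psiTilde w μ) x v⟫ :=
  psiTilde_jacobian_general w μ hw x v
end

section
/- For GMM membership weights ψ_i with means μ_1,…,μ_n, any x ∈ R^d, x ≠ 0, and any t ∈ [−1,1], it holds that ψ_i(tx) ≥ π_i exp(−2 μ_max(‖tx‖ + μ_max)), where μ_max = max_k ‖μ_k‖. Consequently, ∫_{−1}^{1} ψ_i(tx) ψ_j(tx) dt ≥ (1/(2 μ_max ‖x‖)) π_i π_j exp(−4U) (1 − exp(−4 μ_max ‖x‖)), where U = Σ_k ‖μ_k‖². -/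
open MeasureTheory ProbabilityTheory Real Finset
open scoped RealInnerProductSpace BigOperators ENNReal NNReal

lemma gmmPsi_ge_aux {d n : ℕ} (hn : 0 < n) (w : Fin n → ℝ)
    (μ : Fin n → EuclideanSpace ℝ (Fin d))
    (hw : ∀ i, 0 < w i) (hsum : ∑ i, w i = 1) (i : Fin n)
    (M : ℝ) (hM0 : 0 ≤ M) (hM : ∀ k, ‖μ k‖ ≤ M)
    (y : EuclideanSpace ℝ (Fin d)) :
    w i * Real.exp (-(2 * M * (‖y‖ + M))) ≤ gmmPsi w μ i y := by
  have : Nonempty (Fin n) := ⟨⟨0, hn⟩⟩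
  have hS : 0 < ∑ k, w k * Real.exp (-‖y - μ k‖ ^ 2 / 2) :=
    Finset.sum_pos (fun k _ => mul_pos (hw k) (Real.exp_pos _)) Finset.univ_nonempty
  rw [gmmPsi, le_div_iff₀ hS]
  have hSle : ∑ k, w k * Real.exp (-‖y - μ k‖ ^ 2 / 2)
      ≤ Real.exp ((2 * ‖y‖ * M - ‖y‖ ^ 2) / 2) := by
    calc ∑ k, w k * Real.exp (-‖y - μ k‖ ^ 2 / 2)
        ≤ ∑ k, w k * Real.exp ((2 * ‖y‖ * M - ‖y‖ ^ 2) / 2) := by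
          apply Finset.sum_le_sum
          intro k _
          apply mul_le_mul_of_nonneg_left _ (hw k).le
          apply Real.exp_le_exp.2
          have h1 : |‖y‖ - ‖μ k‖| ≤ ‖y - μ k‖ := abs_norm_sub_norm_le y (μ k)
          have h2 : (‖y‖ - ‖μ k‖) ^ 2 ≤ ‖y - μ k‖ ^ 2 := by
            calc (‖y‖ - ‖μ k‖) ^ 2 = |‖y‖ - ‖μ k‖| ^ 2 := (sq_abs _).symm
              _ ≤ ‖y - μ k‖ ^ 2 := pow_le_pow_left₀ (abs_nonneg _) h1 2
          have h3 := hM k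
          have h4 := norm_nonneg y
          nlinarith [sq_nonneg (‖μ k‖)]
      _ = Real.exp ((2 * ‖y‖ * M - ‖y‖ ^ 2) / 2) := by
          rw [← Finset.sum_mul, hsum, one_mul]
  have hnum : Real.exp (-(‖y‖ + M) ^ 2 / 2) ≤ Real.exp (-‖y - μ i‖ ^ 2 / 2) := by
    apply Real.exp_le_exp.2
    have h1 : ‖y - μ i‖ ≤ ‖y‖ + M := (norm_sub_le _ _).trans (by linarith [hM i])
    have h2 : ‖y - μ i‖ ^ 2 ≤ (‖y‖ + M) ^ 2 := pow_le_pow_left₀ (norm_nonneg _) h1 2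
    linarith
  calc w i * Real.exp (-(2 * M * (‖y‖ + M))) * ∑ k, w k * Real.exp (-‖y - μ k‖ ^ 2 / 2)
      ≤ w i * Real.exp (-(2 * M * (‖y‖ + M))) * Real.exp ((2 * ‖y‖ * M - ‖y‖ ^ 2) / 2) := by
        exact mul_le_mul_of_nonneg_left hSle (mul_nonneg (hw i).le (Real.exp_pos _).le)
    _ = w i * Real.exp (-(2 * M * (‖y‖ + M)) + (2 * ‖y‖ * M - ‖y‖ ^ 2) / 2) := by
        rw [mul_assoc, ← Real.exp_add]
    _ ≤ w i * Real.exp (-(‖y‖ + M) ^ 2 / 2) := by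
        apply mul_le_mul_of_nonneg_left _ (hw i).le
        apply Real.exp_le_exp.2
        nlinarith [sq_nonneg M, norm_nonneg y]
    _ ≤ w i * Real.exp (-‖y - μ i‖ ^ 2 / 2) := mul_le_mul_of_nonneg_left hnum (hw i).le

lemma gmmPsi_continuous {d n : ℕ} (hn : 0 < n) (w : Fin n → ℝ)
    (μ : Fin n → EuclideanSpace ℝ (Fin d)) (hw : ∀ i, 0 < w i) (i : Fin n) :
    Continuous fun y : EuclideanSpace ℝ (Fin d) => gmmPsi w μ i y := by
  have : Nonempty (Fin n) := ⟨⟨0, hn⟩⟩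
  have hS : ∀ y : EuclideanSpace ℝ (Fin d), 0 < ∑ k, w k * Real.exp (-‖y - μ k‖ ^ 2 / 2) :=
    fun y => Finset.sum_pos (fun k _ => mul_pos (hw k) (Real.exp_pos _)) Finset.univ_nonempty
  unfold gmmPsi
  apply Continuous.div
  · fun_prop
  · fun_prop
  · exact fun y => (hS y).ne'

/-- Pointwise lower bound for the membership weights along rays, and the resulting lower bound
for `∫_{−1}^1 ψ_i(tx) ψ_j(tx) dt`. -/
theorem integral_psi_mul_lower_bound {d n : ℕ} (hn : 0 < n) (w : Fin n → ℝ)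
    (μ : Fin n → EuclideanSpace ℝ (Fin d))
    (hw : ∀ i, 0 < w i) (hsum : ∑ i, w i = 1)
    (x : EuclideanSpace ℝ (Fin d)) (hx : x ≠ 0) (i j : Fin n) :
    (∀ t ∈ Set.Icc (-1 : ℝ) 1,
        w i * Real.exp (-(2 * (Finset.univ.sup' ⟨⟨0, hn⟩, Finset.mem_univ _⟩ fun k => ‖μ k‖) *
            (‖t • x‖ + Finset.univ.sup' ⟨⟨0, hn⟩, Finset.mem_univ _⟩ fun k => ‖μ k‖)))
          ≤ gmmPsi w μ i (t • x))
    ∧ 1 / (2 * (Finset.univ.sup' ⟨⟨0, hn⟩, Finset.mem_univ _⟩ fun k => ‖μ k‖) * ‖x‖) *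
          (w i * w j) * Real.exp (-(4 * ∑ k, ‖μ k‖ ^ 2)) *
          (1 - Real.exp (-(4 * (Finset.univ.sup' ⟨⟨0, hn⟩, Finset.mem_univ _⟩ fun k => ‖μ k‖) * ‖x‖)))
        ≤ ∫ t in (-1 : ℝ)..1, gmmPsi w μ i (t • x) * gmmPsi w μ j (t • x) := by
  have hne : Nonempty (Fin n) := ⟨⟨0, hn⟩⟩
  set M : ℝ := Finset.univ.sup' ⟨⟨0, hn⟩, Finset.mem_univ _⟩ (fun k => ‖μ k‖) with hMdef
  have hMk : ∀ k, ‖μ k‖ ≤ M := by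
    intro k; rw [hMdef]; exact Finset.le_sup' (fun k => ‖μ k‖) (Finset.mem_univ k)
  have hM0 : 0 ≤ M := (norm_nonneg _).trans (hMk ⟨0, hn⟩)
  have hM2U : M ^ 2 ≤ ∑ k, ‖μ k‖ ^ 2 := by
    obtain ⟨k0, -, hk0⟩ :=
      Finset.exists_mem_eq_sup' (⟨⟨0, hn⟩, Finset.mem_univ _⟩ :
        (Finset.univ : Finset (Fin n)).Nonempty) (fun k => ‖μ k‖)
    rw [hMdef, hk0]
    exact Finset.single_le_sum (fun k _ => sq_nonneg (‖μ k‖)) (Finset.mem_univ k0)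
  refine ⟨fun t _ => gmmPsi_ge_aux hn w μ hw hsum i M hM0 hMk (t • x), ?_⟩
  have hS : ∀ y : EuclideanSpace ℝ (Fin d), 0 < ∑ k, w k * Real.exp (-‖y - μ k‖ ^ 2 / 2) :=
    fun y => Finset.sum_pos (fun k _ => mul_pos (hw k) (Real.exp_pos _)) Finset.univ_nonempty
  have hpsi_nonneg : ∀ (l : Fin n) (y : EuclideanSpace ℝ (Fin d)), 0 ≤ gmmPsi w μ l y :=
    fun l y => div_nonneg (mul_nonneg (hw l).le (Real.exp_pos _).le) (hS y).le
  by_cases hMz : M = 0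
  · have hz : (1 : ℝ) - Real.exp (-(4 * M * ‖x‖)) = 0 := by rw [hMz]; simp
    rw [hz, mul_zero]
    exact intervalIntegral.integral_nonneg (by norm_num)
      (fun t _ => mul_nonneg (hpsi_nonneg i _) (hpsi_nonneg j _))
  · have hMpos : 0 < M := lt_of_le_of_ne hM0 (Ne.symm hMz)
    have hxpos : 0 < ‖x‖ := norm_pos_iff.2 hx
    set a : ℝ := 4 * M * ‖x‖ with hadef
    have hapos : 0 < a := by positivity
    set c : ℝ := w i * w j * Real.exp (-(4 * ∑ k, ‖μ k‖ ^ 2)) with hcdef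
    have hcpos : 0 < c := mul_pos (mul_pos (hw i) (hw j)) (Real.exp_pos _)
    have hcont : Continuous fun t : ℝ => gmmPsi w μ i (t • x) * gmmPsi w μ j (t • x) := by
      have hsm : Continuous fun t : ℝ => t • x := continuous_id.smul continuous_const
      exact ((gmmPsi_continuous hn w μ hw i).comp hsm).mul
        ((gmmPsi_continuous hn w μ hw j).comp hsm)
    have hptwise : ∀ t : ℝ, c * Real.exp (-(a * |t|))
        ≤ gmmPsi w μ i (t • x) * gmmPsi w μ j (t • x) := by
      intro t
      have h1 := gmmPsi_ge_aux hn w μ hw hsum i M hM0 hMk (t • x)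
      have h2 := gmmPsi_ge_aux hn w μ hw hsum j M hM0 hMk (t • x)
      have hnorm : ‖t • x‖ = |t| * ‖x‖ := by rw [norm_smul, Real.norm_eq_abs]
      have hexp : Real.exp (-(4 * ∑ k, ‖μ k‖ ^ 2)) * Real.exp (-(a * |t|))
          ≤ Real.exp (-(2 * M * (‖t • x‖ + M))) * Real.exp (-(2 * M * (‖t • x‖ + M))) := by
        rw [← Real.exp_add, ← Real.exp_add]
        apply Real.exp_le_exp.2
        rw [hnorm, hadef]
        nlinarith [abs_nonneg t, norm_nonneg x, hM2U, hM0]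
      calc c * Real.exp (-(a * |t|))
          = w i * w j * (Real.exp (-(4 * ∑ k, ‖μ k‖ ^ 2)) * Real.exp (-(a * |t|))) := by
            rw [hcdef]; ring
        _ ≤ w i * w j * (Real.exp (-(2 * M * (‖t • x‖ + M))) *
              Real.exp (-(2 * M * (‖t • x‖ + M)))) := by
            apply mul_le_mul_of_nonneg_left hexp
            exact mul_nonneg (hw i).le (hw j).le
        _ = (w i * Real.exp (-(2 * M * (‖t • x‖ + M)))) *
              (w j * Real.exp (-(2 * M * (‖t • x‖ + M)))) := by ring
        _ ≤ gmmPsi w μ i (t • x) * gmmPsi w μ j (t • x) := by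
            exact mul_le_mul h1 h2 (mul_nonneg (hw j).le (Real.exp_pos _).le) (hpsi_nonneg i _)
    have hint_f : ∀ p q : ℝ, IntervalIntegrable
        (fun t => gmmPsi w μ i (t • x) * gmmPsi w μ j (t • x)) volume p q :=
      fun p q => hcont.intervalIntegrable p q
    -- integral over [0,1]
    have hI1 : ∫ t in (0:ℝ)..1, c * Real.exp (-a * t) = c * ((1 - Real.exp (-a)) / a) := by
      rw [intervalIntegral.integral_const_mul]
      congr 1
      rw [intervalIntegral.integral_comp_mul_left (fun u => Real.exp u) (neg_ne_zero.2 hapos.ne')]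
      simp [integral_exp]
      ring
    have hI2 : ∫ t in (-1:ℝ)..0, c * Real.exp (a * t) = c * ((1 - Real.exp (-a)) / a) := by
      rw [intervalIntegral.integral_const_mul]
      congr 1
      rw [intervalIntegral.integral_comp_mul_left (fun u => Real.exp u) hapos.ne']
      simp [integral_exp]
      ring
    have hle1 : c * ((1 - Real.exp (-a)) / a)
        ≤ ∫ t in (0:ℝ)..1, gmmPsi w μ i (t • x) * gmmPsi w μ j (t • x) := by
      rw [← hI1]
      apply intervalIntegral.integral_mono_on (by norm_num)
        (by apply Continuous.intervalIntegrable; fun_prop)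
        (hint_f _ _)
      intro t ht
      have habs : |t| = t := abs_of_nonneg ht.1
      have := hptwise t
      rw [habs] at this
      rwa [neg_mul]
    have hle2 : c * ((1 - Real.exp (-a)) / a)
        ≤ ∫ t in (-1:ℝ)..0, gmmPsi w μ i (t • x) * gmmPsi w μ j (t • x) := by
      rw [← hI2]
      apply intervalIntegral.integral_mono_on (by norm_num)
        (by apply Continuous.intervalIntegrable; fun_prop)
        (hint_f _ _)
      intro t ht
      have habs : |t| = -t := abs_of_nonpos ht.2
      have := hptwise t
      rw [habs] at this
      have heq : -(a * -t) = a * t := by ring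
      rwa [heq] at this
    have hsplit : (∫ t in (-1:ℝ)..1, gmmPsi w μ i (t • x) * gmmPsi w μ j (t • x))
        = (∫ t in (-1:ℝ)..0, gmmPsi w μ i (t • x) * gmmPsi w μ j (t • x))
          + ∫ t in (0:ℝ)..1, gmmPsi w μ i (t • x) * gmmPsi w μ j (t • x) :=
      (intervalIntegral.integral_add_adjacent_intervals (hint_f _ _) (hint_f _ _)).symm
    have hfinal : 1 / (2 * M * ‖x‖) * (w i * w j) * Real.exp (-(4 * ∑ k, ‖μ k‖ ^ 2)) *
        (1 - Real.exp (-(4 * M * ‖x‖)))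
        = c * ((1 - Real.exp (-a)) / a) + c * ((1 - Real.exp (-a)) / a) := by
      rw [hcdef, hadef]
      field_simp
      ring
    rw [hsplit, hfinal]
    exact add_le_add hle2 hle1
end

section
/- If there exists k ∈ [n] with ‖μ_k − μ_{i_max}‖ ≥ μ_max/2, where i_max = argmax_i ‖μ_i‖ and μ_max = ‖μ_{i_max}‖, then Σ_{i,j∈[n]} π_i π_j ‖μ_i − μ_j‖² ≥ (π_min/8) μ_max², where π_min = min_i π_i. -/
open MeasureTheory ProbabilityTheory Real Finset
open scoped RealInnerProductSpace BigOperators ENNReal NNReal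

/-! For every `i`, the triangle inequality through `μ i` gives
`‖μ k - μ imax‖² ≤ 2 (‖μ i - μ k‖² + ‖μ i - μ imax‖²)`, so the inner sum `∑ j, π_j ‖μ i - μ j‖²`
is at least `(π_min / 2) ‖μ k - μ imax‖² ≥ (π_min / 8) μ_max²`; averaging over `i` with the
weights `π_i` gives the bound. -/

section WeightedDistances

variable {ι X : Type*} [Fintype ι] [PseudoMetricSpace X]

theorem dist_sq_le_two_mul_dist_sq_add (x y z : X) :
    dist y z ^ 2 ≤ 2 * (dist x y ^ 2 + dist x z ^ 2) :=
  (pow_le_pow_left₀ dist_nonneg (dist_triangle_left y z x) 2).trans add_sq_le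

variable {w : ι → ℝ} {m : ℝ}

theorem mul_dist_sq_div_two_le_sum_mul_dist_sq (hm0 : 0 ≤ m) (hm : ∀ j, m ≤ w j)
    (p : ι → X) (x : X) (k l : ι) :
    m * dist (p k) (p l) ^ 2 / 2 ≤ ∑ j, w j * dist x (p j) ^ 2 := by
  have hterm : ∀ j, m * dist x (p j) ^ 2 ≤ w j * dist x (p j) ^ 2 := fun j =>
    mul_le_mul_of_nonneg_right (hm j) (sq_nonneg _)
  have hnonneg : ∀ j ∈ univ, 0 ≤ w j * dist x (p j) ^ 2 := fun j _ =>
    (mul_nonneg hm0 (sq_nonneg _)).trans (hterm j)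
  rcases eq_or_ne k l with rfl | hkl
  · simpa using sum_nonneg hnonneg
  calc m * dist (p k) (p l) ^ 2 / 2
      ≤ m * dist x (p k) ^ 2 + m * dist x (p l) ^ 2 := by
        nlinarith [dist_sq_le_two_mul_dist_sq_add x (p k) (p l)]
    _ ≤ w k * dist x (p k) ^ 2 + w l * dist x (p l) ^ 2 := add_le_add (hterm k) (hterm l)
    _ ≤ ∑ j, w j * dist x (p j) ^ 2 := add_le_sum hnonneg (mem_univ k) (mem_univ l) hkl

theorem mul_dist_sq_div_two_le_sum_sum_mul_dist_sq (hm0 : 0 ≤ m) (hm : ∀ j, m ≤ w j)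
    (hsum : ∑ i, w i = 1) (p : ι → X) (k l : ι) :
    m * dist (p k) (p l) ^ 2 / 2 ≤ ∑ i, ∑ j, w i * w j * dist (p i) (p j) ^ 2 :=
  calc m * dist (p k) (p l) ^ 2 / 2
      = ∑ i, w i * (m * dist (p k) (p l) ^ 2 / 2) := by rw [← sum_mul, hsum, one_mul]
    _ ≤ ∑ i, w i * ∑ j, w j * dist (p i) (p j) ^ 2 := sum_le_sum fun i _ =>
        mul_le_mul_of_nonneg_left (mul_dist_sq_div_two_le_sum_mul_dist_sq hm0 hm p (p i) k l)
          (hm0.trans (hm i))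
    _ = ∑ i, ∑ j, w i * w j * dist (p i) (p j) ^ 2 := by simp only [mul_sum, mul_assoc]

end WeightedDistances

theorem separated_mu_lower_bound_general {d n : ℕ} (hn : 0 < n)
    (μ : Fin n → EuclideanSpace ℝ (Fin d)) (w : Fin n → ℝ)
    (hw : ∀ i, 0 < w i) (hsum : ∑ i, w i = 1)
    (imax : Fin n)
    (k : Fin n) (hk : ‖μ imax‖ / 2 ≤ ‖μ k - μ imax‖) :
    (Finset.univ.inf' ⟨⟨0, hn⟩, Finset.mem_univ _⟩ w) / 8 * ‖μ imax‖ ^ 2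
      ≤ ∑ i, ∑ j, w i * w j * ‖μ i - μ j‖ ^ 2 := by
  set m := Finset.univ.inf' ⟨⟨0, hn⟩, Finset.mem_univ _⟩ w
  have hm : ∀ j, m ≤ w j := fun j => inf'_le w (mem_univ j)
  have hm0 : 0 ≤ m := le_inf' _ w fun i _ => (hw i).le
  have hsep : (‖μ imax‖ / 2) ^ 2 ≤ dist (μ k) (μ imax) ^ 2 := by
    rw [dist_eq_norm]
    exact pow_le_pow_left₀ (by positivity) hk 2
  calc m / 8 * ‖μ imax‖ ^ 2 = m * (‖μ imax‖ / 2) ^ 2 / 2 := by ring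
    _ ≤ m * dist (μ k) (μ imax) ^ 2 / 2 := by gcongr
    _ ≤ ∑ i, ∑ j, w i * w j * dist (μ i) (μ j) ^ 2 :=
        mul_dist_sq_div_two_le_sum_sum_mul_dist_sq hm0 hm hsum μ k imax
    _ = ∑ i, ∑ j, w i * w j * ‖μ i - μ j‖ ^ 2 := by simp only [dist_eq_norm]

/-- If some `μ_k` is `μ_max/2`-far from the longest mean, then the weighted pairwise distances
are bounded below by `(π_min/8) μ_max²`. -/
theorem separated_mu_lower_bound {d n : ℕ} (hn : 0 < n)
    (μ : Fin n → EuclideanSpace ℝ (Fin d)) (w : Fin n → ℝ)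
    (hw : ∀ i, 0 < w i) (hsum : ∑ i, w i = 1)
    (imax : Fin n) (himax : ∀ i, ‖μ i‖ ≤ ‖μ imax‖)
    (k : Fin n) (hk : ‖μ imax‖ / 2 ≤ ‖μ k - μ imax‖) :
    (Finset.univ.inf' ⟨⟨0, hn⟩, Finset.mem_univ _⟩ w) / 8 * ‖μ imax‖ ^ 2
      ≤ ∑ i, ∑ j, w i * w j * ‖μ i - μ j‖ ^ 2 :=
  separated_mu_lower_bound_general hn μ w hw hsum imax k hk
end

section
/- Let ψ̃_μ(x) = Σ_i ψ_i(x) μ_i with ψ_i differentiable and let x ~ N(0,I_d). Then E_x[‖ψ̃_μ(x)‖²] ≥ (1/4) E_x[(∫_{−1}^{1} x^T (∇ψ̃_μ(tx)) x̄ dt)²], where x̄ = x/‖x‖ (the integrand defined arbitrarily at x = 0). -/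
open MeasureTheory ProbabilityTheory Real Finset
open scoped RealInnerProductSpace BigOperators ENNReal NNReal

/-! By the fundamental theorem of calculus along `t ↦ t • x`, the line integral equals
`⟪x̄, ψ x - ψ (-x)⟫` with `x̄ = ‖x‖⁻¹ • x`, whose square is at most `2‖ψ x‖² + 2‖ψ (-x)‖²`.
The standard Gaussian is invariant under `x ↦ -x`, so both terms have expectation `E‖ψ‖²`. -/

section LineIntegral

variable {E : Type*} [NormedAddCommGroup E] [InnerProductSpace ℝ E]

theorem integral_inner_fderiv_smul_eq {ψ : E → E} (hψ : ContDiff ℝ 1 ψ) (v x : E) :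
    ∫ t in (-1 : ℝ)..1, ⟪v, fderiv ℝ ψ (t • x) x⟫ = ⟪v, ψ x - ψ (-x)⟫ := by
  have hderiv (t : ℝ) : HasDerivAt (fun s : ℝ => ⟪v, ψ (s • x)⟫) ⟪v, fderiv ℝ ψ (t • x) x⟫ t := by
    have hline : HasDerivAt (fun s : ℝ => s • x) x t := by
      simpa using (hasDerivAt_id t).smul_const x
    exact ((innerSL ℝ v).hasFDerivAt.comp_hasDerivAt t
      ((hψ.differentiable one_ne_zero (t • x)).hasFDerivAt.comp_hasDerivAt t hline))
  have hcont : Continuous fun t : ℝ => ⟪v, fderiv ℝ ψ (t • x) x⟫ := by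
    have := hψ.continuous_fderiv one_ne_zero
    fun_prop
  rw [intervalIntegral.integral_eq_sub_of_hasDerivAt (fun t _ => hderiv t)
    (hcont.intervalIntegrable _ _), one_smul, neg_one_smul, inner_sub_right]

theorem integral_inner_fderiv_smul_normalize_eq {ψ : E → E} (hψ : ContDiff ℝ 1 ψ) (x : E) :
    ∫ t in (-1 : ℝ)..1, ⟪x, fderiv ℝ ψ (t • x) (‖x‖⁻¹ • x)⟫
      = ⟪‖x‖⁻¹ • x, ψ x - ψ (-x)⟫ := by
  rw [← integral_inner_fderiv_smul_eq hψ]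
  congr 1 with t
  rw [map_smul, real_inner_smul_right, real_inner_smul_left]

theorem sq_inner_sub_le_of_norm_le_one {u : E} (hu : ‖u‖ ≤ 1) (a b : E) :
    ⟪u, a - b⟫ ^ 2 ≤ 2 * ‖a‖ ^ 2 + 2 * ‖b‖ ^ 2 := by
  have hinner : |⟪u, a - b⟫| ≤ ‖a‖ + ‖b‖ :=
    calc |⟪u, a - b⟫| ≤ ‖u‖ * ‖a - b‖ := abs_real_inner_le_norm u _
      _ ≤ 1 * (‖a‖ + ‖b‖) := by gcongr; exact norm_sub_le a b
      _ = ‖a‖ + ‖b‖ := one_mul _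
  calc ⟪u, a - b⟫ ^ 2 = |⟪u, a - b⟫| ^ 2 := (sq_abs _).symm
    _ ≤ (‖a‖ + ‖b‖) ^ 2 := by gcongr
    _ ≤ 2 * ‖a‖ ^ 2 + 2 * ‖b‖ ^ 2 := by nlinarith [sq_nonneg (‖a‖ - ‖b‖)]

theorem sq_integral_inner_fderiv_le {ψ : E → E} (hψ : ContDiff ℝ 1 ψ) (x : E) :
    (∫ t in (-1 : ℝ)..1, ⟪x, fderiv ℝ ψ (t • x) (‖x‖⁻¹ • x)⟫) ^ 2
      ≤ 2 * ‖ψ x‖ ^ 2 + 2 * ‖ψ (-x)‖ ^ 2 := by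
  rw [integral_inner_fderiv_smul_normalize_eq hψ]
  refine sq_inner_sub_le_of_norm_le_one ?_ _ _
  rw [norm_smul, norm_inv, norm_norm]
  exact inv_mul_le_one_of_le₀ le_rfl (norm_nonneg x)

theorem integral_sq_integral_inner_fderiv_le [MeasurableSpace E] [BorelSpace E]
    (ν : Measure E) [ν.IsNegInvariant] {ψ : E → E} (hψ : ContDiff ℝ 1 ψ)
    (hint : Integrable (fun x => ‖ψ x‖ ^ 2) ν) :
    (1 / 4 : ℝ) * ∫ x, (∫ t in (-1 : ℝ)..1, ⟪x, fderiv ℝ ψ (t • x) (‖x‖⁻¹ • x)⟫) ^ 2 ∂ν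
      ≤ ∫ x, ‖ψ x‖ ^ 2 ∂ν := by
  have hint_neg : Integrable (fun x => ‖ψ (-x)‖ ^ 2) ν := hint.comp_neg
  calc (1 / 4 : ℝ) * ∫ x, (∫ t in (-1 : ℝ)..1, ⟪x, fderiv ℝ ψ (t • x) (‖x‖⁻¹ • x)⟫) ^ 2 ∂ν
      ≤ (1 / 4 : ℝ) * ∫ x, (2 * ‖ψ x‖ ^ 2 + 2 * ‖ψ (-x)‖ ^ 2) ∂ν := by
        refine mul_le_mul_of_nonneg_left ?_ (by norm_num)
        exact integral_mono_of_nonneg (ae_of_all _ fun x => sq_nonneg _)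
          ((hint.const_mul 2).add (hint_neg.const_mul 2))
          (ae_of_all ν (sq_integral_inner_fderiv_le hψ))
    _ = ∫ x, ‖ψ x‖ ^ 2 ∂ν := by
        rw [integral_add (hint.const_mul 2) (hint_neg.const_mul 2), integral_const_mul,
          integral_const_mul, integral_neg_eq_self (fun x => ‖ψ x‖ ^ 2)]
        ring

end LineIntegral

instance isNegInvariant_gaussianReal_zero (v : ℝ≥0) : (gaussianReal 0 v).IsNegInvariant :=
  ⟨gaussianReal_map_neg.trans (by rw [neg_zero])⟩

instance isProbabilityMeasure_stdGaussian (d : ℕ) : IsProbabilityMeasure (stdGaussian d) :=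
  Measure.isProbabilityMeasure_map (by fun_prop)

instance isNegInvariant_stdGaussian (d : ℕ) : (stdGaussian d).IsNegInvariant := by
  refine ⟨?_⟩
  set e := (EuclideanSpace.equiv (Fin d) ℝ).symm
  have he : Measurable e := e.continuous.measurable
  have hcomm : Neg.neg ∘ e = e ∘ Neg.neg := funext fun a => (map_neg e a).symm
  rw [Measure.neg, _root_.stdGaussian, Measure.map_map measurable_neg he, hcomm,
    ← Measure.map_map he measurable_neg, ← Measure.neg, Measure.IsNegInvariant.neg_eq_self]

section GaussianMixture

variable {d n : ℕ} {w : Fin n → ℝ} {μ : Fin n → EuclideanSpace ℝ (Fin d)}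

theorem gmm_denom_pos (hw : ∀ i, 0 < w i) (i : Fin n) (x : EuclideanSpace ℝ (Fin d)) :
    0 < ∑ k, w k * Real.exp (-‖x - μ k‖ ^ 2 / 2) :=
  Finset.sum_pos (fun k _ => mul_pos (hw k) (Real.exp_pos _)) ⟨i, Finset.mem_univ i⟩

theorem contDiff_gmmPsi (hw : ∀ i, 0 < w i) (i : Fin n) :
    ContDiff ℝ ⊤ (gmmPsi w μ i) := by
  have hterm (k : Fin n) :
      ContDiff ℝ ⊤ fun x : EuclideanSpace ℝ (Fin d) => w k * Real.exp (-‖x - μ k‖ ^ 2 / 2) :=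
    contDiff_const.mul (Real.contDiff_exp.comp
      ((((contDiff_id.sub contDiff_const).norm_sq ℝ).neg).div_const 2))
  exact (hterm i).div (ContDiff.sum fun k _ => hterm k) fun x => (gmm_denom_pos hw i x).ne'

theorem contDiff_psiTilde (hw : ∀ i, 0 < w i) : ContDiff ℝ ⊤ (psiTilde w μ) :=
  ContDiff.sum fun i _ => (contDiff_gmmPsi hw i).smul contDiff_const

theorem gmmPsi_mem_Icc (hw : ∀ i, 0 < w i) (i : Fin n) (x : EuclideanSpace ℝ (Fin d)) :
    gmmPsi w μ i x ∈ Set.Icc (0 : ℝ) 1 := by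
  have hD := gmm_denom_pos (μ := μ) hw i x
  refine ⟨div_nonneg (mul_pos (hw i) (Real.exp_pos _)).le hD.le, ?_⟩
  rw [gmmPsi, div_le_one hD]
  exact Finset.single_le_sum (f := fun k => w k * Real.exp (-‖x - μ k‖ ^ 2 / 2))
    (fun k _ => (mul_pos (hw k) (Real.exp_pos _)).le) (Finset.mem_univ i)

theorem norm_psiTilde_le (hw : ∀ i, 0 < w i) (x : EuclideanSpace ℝ (Fin d)) :
    ‖psiTilde w μ x‖ ≤ ∑ i, ‖μ i‖ := by
  refine (norm_sum_le _ _).trans (Finset.sum_le_sum fun i _ => ?_)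
  obtain ⟨h0, h1⟩ := gmmPsi_mem_Icc (μ := μ) hw i x
  rw [norm_smul, Real.norm_of_nonneg h0]
  exact mul_le_of_le_one_left (norm_nonneg _) h1

theorem integrable_norm_psiTilde_sq (hw : ∀ i, 0 < w i) :
    Integrable (fun x => ‖psiTilde w μ x‖ ^ 2) (stdGaussian d) := by
  refine Integrable.of_bound (((contDiff_psiTilde hw).continuous.norm.pow 2).aestronglyMeasurable)
    ((∑ i, ‖μ i‖) ^ 2) (ae_of_all _ fun x => ?_)
  rw [Real.norm_of_nonneg (by positivity)]
  exact pow_le_pow_left₀ (norm_nonneg _) (norm_psiTilde_le hw x) 2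

end GaussianMixture

theorem psiTilde_sq_ge_line_integral_general {d n : ℕ} (w : Fin n → ℝ)
    (μ : Fin n → EuclideanSpace ℝ (Fin d))
    (hw : ∀ i, 0 < w i) :
    (1 / 4 : ℝ) * ∫ x,
        (∫ t in (-1 : ℝ)..1, ⟪x, fderiv ℝ (psiTilde w μ) (t • x) (‖x‖⁻¹ • x)⟫) ^ 2
          ∂ stdGaussian d
      ≤ ∫ x, ‖psiTilde w μ x‖ ^ 2 ∂ stdGaussian d :=
  integral_sq_integral_inner_fderiv_le _ ((contDiff_psiTilde hw).of_le le_top)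
    (integrable_norm_psiTilde_sq hw)

/-- `E[‖ψ̃_μ(x)‖²] ≥ (1/4) E[(∫_{−1}^1 xᵀ ∇ψ̃_μ(tx) x̄ dt)²]` where `x̄ = x/‖x‖`. -/
theorem psiTilde_sq_ge_line_integral {d n : ℕ} (w : Fin n → ℝ)
    (μ : Fin n → EuclideanSpace ℝ (Fin d))
    (hw : ∀ i, 0 < w i) (hsum : ∑ i, w i = 1) :
    (1 / 4 : ℝ) * ∫ x,
        (∫ t in (-1 : ℝ)..1, ⟪x, fderiv ℝ (psiTilde w μ) (t • x) (‖x‖⁻¹ • x)⟫) ^ 2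
          ∂ stdGaussian d
      ≤ ∫ x, ‖psiTilde w μ x‖ ^ 2 ∂ stdGaussian d :=
  psiTilde_sq_ge_line_integral_general w μ hw
end
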